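/- arXiv:2212.08291 — 6 statements merged into one kernel-verified Lean document; each statement's English description precedes it below -/
import Mathlib

section
/- (Interval-width formula.) Suppose a continuous driver $\xi : [0,\tau] \to \mathbb{R}$ welds initial points $x_0 < \xi(0) < y_0$ at time $\tau$ (i.e., the flows $x(t), y(t)$ of $x_0, y_0$ under $\xi$ both hit $\xi$ exactly at time $\tau$). Let $I(t) := y(t) - x(t)$ and let $\alpha : [0, \tau) \to (0,1)$ be defined by $\xi(t) = (1 - \alpha(t)) x(t) + \alpha(t) y(t)$. Then for all $0 \leq t \leq \tau$, $I(t) = \sqrt{I(0)^2 - 4 \int_0^t \frac{ds}{\alpha(s)(1 - \alpha(s))}}$; in particular the integral converges as $t \to \tau$ and $I(0)^2 = \int_0^\tau \frac{4\, ds}{\alpha(s)(1-\alpha(s))}$. -/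
/-!
Squaring the width turns the Loewner flow into a quadrature: with `α = (ξ - x)/(y - x)`,
`d/dt (y - x)² = -4 / (α (1 - α))`. The right-hand side has a sign, so its integrability on
`(0, τ)` comes for free from the continuity of `(y - x)²` at the welding time, and the
fundamental theorem of calculus on `[0, t]` gives the formula, the case `t = τ` using
`y τ - x τ = 0`.
-/

open Set MeasureTheory intervalIntegral

/-- `1 / (α (1 - α))`, where `ξ = (1 - α) x + α y`. -/
noncomputable def weldingWeight (ξ x y : ℝ) : ℝ :=
  1 / ((ξ - x) / (y - x) * (1 - (ξ - x) / (y - x)))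

lemma weldingWeight_eq {ξ x y : ℝ} (h : x ≠ y) :
    weldingWeight ξ x y = (y - x) ^ 2 / ((ξ - x) * (y - ξ)) := by
  have : y - x ≠ 0 := sub_ne_zero.mpr h.symm
  rw [weldingWeight, one_div, ← inv_div]
  field_simp
  ring

lemma weldingWeight_nonneg {ξ x y : ℝ} (hx : x ≤ ξ) (hy : ξ ≤ y) : 0 ≤ weldingWeight ξ x y := by
  have hα₀ : 0 ≤ (ξ - x) / (y - x) := div_nonneg (by linarith) (by linarith)
  have hα₁ : (ξ - x) / (y - x) ≤ 1 := div_le_one_of_le₀ (by linarith) (by linarith)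
  exact one_div_nonneg.mpr (mul_nonneg hα₀ (by linarith))

lemma hasDerivAt_neg_sq_width_div_four {ξ x y : ℝ → ℝ} {t : ℝ}
    (hx : HasDerivAt x (-2 / (x t - ξ t)) t) (hy : HasDerivAt y (-2 / (y t - ξ t)) t)
    (hxξ : x t < ξ t) (hξy : ξ t < y t) :
    HasDerivAt (fun s => -(y s - x s) ^ 2 / 4) (weldingWeight (ξ t) (x t) (y t)) t := by
  refine (((hy.sub hx).pow 2).neg.div_const 4).congr_deriv ?_
  rw [weldingWeight_eq (by linarith)]
  have h₁ : x t - ξ t ≠ 0 := by linarith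
  have h₂ : y t - ξ t ≠ 0 := by linarith
  have h₃ : ξ t - x t ≠ 0 := by linarith
  simp only [Pi.sub_apply, Nat.cast_ofNat]
  field_simp
  ring

theorem statement9_general (τ : ℝ) (hτ : 0 < τ) (ξ x y : ℝ → ℝ)
    (hodex : ∀ t ∈ Set.Ico (0:ℝ) τ, HasDerivWithinAt x (-2 / (x t - ξ t)) (Set.Ici 0) t)
    (hodey : ∀ t ∈ Set.Ico (0:ℝ) τ, HasDerivWithinAt y (-2 / (y t - ξ t)) (Set.Ici 0) t)
    (horder : ∀ t ∈ Set.Ico (0:ℝ) τ, x t < ξ t ∧ ξ t < y t)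
    (hcx : ContinuousOn x (Set.Icc 0 τ)) (hcy : ContinuousOn y (Set.Icc 0 τ))
    (hweldx : x τ = ξ τ) (hweldy : y τ = ξ τ) :
    MeasureTheory.IntegrableOn
        (fun s => 1 / (((ξ s - x s) / (y s - x s)) * (1 - (ξ s - x s) / (y s - x s))))
        (Set.Ioo 0 τ) ∧
      (∀ t ∈ Set.Icc (0:ℝ) τ,
        y t - x t = Real.sqrt ((y 0 - x 0) ^ 2 -
          4 * ∫ s in (0:ℝ)..t,
            1 / (((ξ s - x s) / (y s - x s)) * (1 - (ξ s - x s) / (y s - x s))))) ∧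
      (y 0 - x 0) ^ 2 = ∫ s in (0:ℝ)..τ,
          4 / (((ξ s - x s) / (y s - x s)) * (1 - (ξ s - x s) / (y s - x s))) := by
  set w : ℝ → ℝ := fun s => weldingWeight (ξ s) (x s) (y s)
  have hcont : ContinuousOn (fun s => -(y s - x s) ^ 2 / 4) (Icc 0 τ) := by fun_prop
  have hderiv : ∀ t ∈ Ioo 0 τ, HasDerivAt (fun s => -(y s - x s) ^ 2 / 4) (w t) t := by
    intro t ht
    have ht' := Ioo_subset_Ico_self ht
    exact hasDerivAt_neg_sq_width_div_four
      ((hodex t ht').hasDerivAt (Ici_mem_nhds ht.1)) ((hodey t ht').hasDerivAt (Ici_mem_nhds ht.1))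
      (horder t ht').1 (horder t ht').2
  have hw : IntegrableOn w (Ioc 0 τ) :=
    integrableOn_deriv_of_nonneg hcont hderiv fun t ht =>
      have ht' := Ioo_subset_Ico_self ht
      weldingWeight_nonneg (horder t ht').1.le (horder t ht').2.le
  have hftc : ∀ t ∈ Icc 0 τ, ∫ s in (0:ℝ)..t, w s = ((y 0 - x 0) ^ 2 - (y t - x t) ^ 2) / 4 := by
    intro t ht
    rw [integral_eq_sub_of_hasDerivAt_of_le ht.1 (hcont.mono (Icc_subset_Icc_right ht.2))
      (fun s hs => hderiv s ⟨hs.1, hs.2.trans_le ht.2⟩)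
      ((intervalIntegrable_iff_integrableOn_Ioc_of_le ht.1).mpr
        (hw.mono_set (Ioc_subset_Ioc_right ht.2)))]
    ring
  refine ⟨hw.mono_set Ioo_subset_Ioc_self, fun t ht => ?_, ?_⟩
  · have hwidth : 0 ≤ y t - x t := by
      rcases ht.2.lt_or_eq with htτ | rfl
      · linarith [horder t ⟨ht.1, htτ⟩]
      · rw [hweldx, hweldy, sub_self]
    change _ = √(_ - 4 * ∫ s in (0:ℝ)..t, w s)
    rw [hftc t ht, mul_div_cancel₀ _ four_ne_zero, sub_sub_cancel, Real.sqrt_sq hwidth]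
  · simp_rw [div_eq_mul_one_div (4 : ℝ)]
    change _ = ∫ s in (0:ℝ)..τ, 4 * w s
    rw [intervalIntegral.integral_const_mul, hftc τ (right_mem_Icc.mpr hτ.le), hweldx, hweldy]
    ring

theorem statement9 (τ : ℝ) (hτ : 0 < τ) (ξ x y : ℝ → ℝ)
    (hξ : ContinuousOn ξ (Set.Icc 0 τ))
    (hb : x 0 < ξ 0 ∧ ξ 0 < y 0)
    (hodex : ∀ t ∈ Set.Ico (0:ℝ) τ, HasDerivWithinAt x (-2 / (x t - ξ t)) (Set.Ici 0) t)
    (hodey : ∀ t ∈ Set.Ico (0:ℝ) τ, HasDerivWithinAt y (-2 / (y t - ξ t)) (Set.Ici 0) t)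
    (horder : ∀ t ∈ Set.Ico (0:ℝ) τ, x t < ξ t ∧ ξ t < y t)
    (hcx : ContinuousOn x (Set.Icc 0 τ)) (hcy : ContinuousOn y (Set.Icc 0 τ))
    (hweldx : x τ = ξ τ) (hweldy : y τ = ξ τ) :
    MeasureTheory.IntegrableOn
        (fun s => 1 / (((ξ s - x s) / (y s - x s)) * (1 - (ξ s - x s) / (y s - x s))))
        (Set.Ioo 0 τ) ∧
      (∀ t ∈ Set.Icc (0:ℝ) τ,
        y t - x t = Real.sqrt ((y 0 - x 0) ^ 2 -
          4 * ∫ s in (0:ℝ)..t,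
            1 / (((ξ s - x s) / (y s - x s)) * (1 - (ξ s - x s) / (y s - x s))))) ∧
      (y 0 - x 0) ^ 2 = ∫ s in (0:ℝ)..τ,
          4 / (((ξ s - x s) / (y s - x s)) * (1 - (ξ s - x s) / (y s - x s))) :=
  statement9_general τ hτ ξ x y hodex hodey horder hcx hcy hweldx hweldy
end

section
/- (Maximal welding time.) Suppose a continuous driver $\xi : [0,\tau] \to \mathbb{R}$ welds initial points $x_0 < \xi(0) < y_0$ at time $\tau$ (the flows of $x_0$ and $y_0$ under the upward Loewner equation driven by $\xi$ both first hit $\xi$ at time $\tau$). Then $\tau \leq (y_0 - x_0)^2 / 16$, with equality achieved when $\xi$ is constantly equal to $(x_0 + y_0)/2$. -/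
/-!
The quantity `(y t - x t)² + 16 t` is non-increasing along the flow: writing
`ξ = (1 - α) x + α y`, the derivative of `(y - x)²` is `-4 / (α (1 - α)) ≤ -16`.
Comparing its values at `0` and at the welding time, where `y - x = 0`, gives the bound.
For the constant driver `c = (x₀ + y₀) / 2` the quantity `(y t - c)² + 4 t` is conserved,
which gives equality.
-/

open Set

theorem two_mul_sub_mul_loewner_sub_le {x ξ y : ℝ} (hx : x < ξ) (hy : ξ < y) :
    2 * (y - x) * (-2 / (y - ξ) - -2 / (x - ξ)) ≤ -16 := by
  have hyξ : 0 < y - ξ := sub_pos.mpr hy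
  have hξx : 0 < ξ - x := sub_pos.mpr hx
  have hgap : 2 * (y - x) * (-2 / (y - ξ) - -2 / (x - ξ)) =
      -(4 * (y - x) ^ 2 / ((y - ξ) * (ξ - x))) := by
    field_simp [(sub_neg.mpr hx).ne]
    ring
  have hamgm : 16 ≤ 4 * (y - x) ^ 2 / ((y - ξ) * (ξ - x)) := by
    rw [le_div_iff₀ (mul_pos hyξ hξx)]
    nlinarith [sq_nonneg ((y - ξ) - (ξ - x))]
  linarith

theorem le_of_hasDerivWithinAt_Ici_nonpos {f f' : ℝ → ℝ} {a b : ℝ} (hab : a ≤ b)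
    (hf : ContinuousOn f (Icc a b)) (hf' : ∀ t ∈ Ico a b, HasDerivWithinAt f (f' t) (Ici t) t)
    (hnonpos : ∀ t ∈ Ico a b, f' t ≤ 0) : f b ≤ f a :=
  image_le_of_deriv_right_le_deriv_boundary (B := fun _ => f a) hf hf' le_rfl continuousOn_const
    (fun t _ => hasDerivWithinAt_const t _ (f a)) hnonpos ⟨hab, le_rfl⟩

theorem sq_sub_add_sixteen_mul_le {ξ x y : ℝ → ℝ} {a b : ℝ} (hab : a ≤ b)
    (hcx : ContinuousOn x (Icc a b)) (hcy : ContinuousOn y (Icc a b))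
    (hodex : ∀ t ∈ Ico a b, HasDerivWithinAt x (-2 / (x t - ξ t)) (Ici t) t)
    (hodey : ∀ t ∈ Ico a b, HasDerivWithinAt y (-2 / (y t - ξ t)) (Ici t) t)
    (horder : ∀ t ∈ Ico a b, x t < ξ t ∧ ξ t < y t) :
    (y b - x b) ^ 2 + 16 * b ≤ (y a - x a) ^ 2 + 16 * a := by
  refine le_of_hasDerivWithinAt_Ici_nonpos (f := fun t => (y t - x t) ^ 2 + 16 * t)
    (f' := fun t => 2 * (y t - x t) * (-2 / (y t - ξ t) - -2 / (x t - ξ t)) + 16) hab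
    (((hcy.sub hcx).pow 2).add (continuousOn_const.mul continuousOn_id))
    (fun t ht => ?_) (fun t ht => ?_)
  · refine ((((hodey t ht).sub (hodex t ht)).pow 2).add
      ((hasDerivWithinAt_id t _).const_mul 16)).congr_deriv ?_
    simp only [Pi.sub_apply]
    ring
  · linarith [two_mul_sub_mul_loewner_sub_le (horder t ht).1 (horder t ht).2]

theorem sq_sub_add_four_mul_eq {u : ℝ → ℝ} {c a b : ℝ} (hab : a ≤ b)
    (hcu : ContinuousOn u (Icc a b))
    (hode : ∀ t ∈ Ico a b, HasDerivWithinAt u (-2 / (u t - c)) (Ici t) t)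
    (hne : ∀ t ∈ Ico a b, u t ≠ c) :
    (u b - c) ^ 2 + 4 * b = (u a - c) ^ 2 + 4 * a := by
  refine constant_of_has_deriv_right_zero (f := fun t => (u t - c) ^ 2 + 4 * t)
    (((hcu.sub continuousOn_const).pow 2).add (continuousOn_const.mul continuousOn_id))
    (fun t ht => ?_) b ⟨hab, le_rfl⟩
  refine ((((hode t ht).sub_const c).pow 2).add
    ((hasDerivWithinAt_id t _).const_mul 4)).congr_deriv ?_
  field_simp [sub_ne_zero.mpr (hne t ht)]
  ring

theorem statement10_general (τ : ℝ) (hτ : 0 < τ) (ξ x y : ℝ → ℝ)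
    (hodex : ∀ t ∈ Set.Ico (0:ℝ) τ, HasDerivWithinAt x (-2 / (x t - ξ t)) (Set.Ici 0) t)
    (hodey : ∀ t ∈ Set.Ico (0:ℝ) τ, HasDerivWithinAt y (-2 / (y t - ξ t)) (Set.Ici 0) t)
    (horder : ∀ t ∈ Set.Ico (0:ℝ) τ, x t < ξ t ∧ ξ t < y t)
    (hcx : ContinuousOn x (Set.Icc 0 τ)) (hcy : ContinuousOn y (Set.Icc 0 τ))
    (hweldx : x τ = ξ τ) (hweldy : y τ = ξ τ) :
    τ ≤ (y 0 - x 0) ^ 2 / 16 ∧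
      ((∀ t ∈ Set.Icc (0:ℝ) τ, ξ t = (x 0 + y 0) / 2) →
        τ = (y 0 - x 0) ^ 2 / 16) := by
  have hIci {u u' : ℝ → ℝ} (h : ∀ t ∈ Ico 0 τ, HasDerivWithinAt u (u' t) (Ici 0) t) :
      ∀ t ∈ Ico 0 τ, HasDerivWithinAt u (u' t) (Ici t) t :=
    fun t ht => (h t ht).mono (Ici_subset_Ici.mpr ht.1)
  refine ⟨?_, fun hconst => ?_⟩
  · have hdecay := sq_sub_add_sixteen_mul_le hτ.le hcx hcy (hIci hodex) (hIci hodey) horder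
    rw [hweldx, hweldy] at hdecay
    linarith
  · have hξ {t} (ht : t ∈ Ico 0 τ) : ξ t = (x 0 + y 0) / 2 := hconst t (Ico_subset_Icc_self ht)
    have hconserved := sq_sub_add_four_mul_eq hτ.le hcy
      (fun t ht => by rw [← hξ ht]; exact hIci hodey t ht)
      (fun t ht => hξ ht ▸ (horder t ht).2.ne')
    rw [hweldy, hconst τ ⟨hτ.le, le_rfl⟩] at hconserved
    linarith [show (y 0 - (x 0 + y 0) / 2) ^ 2 = (y 0 - x 0) ^ 2 / 4 by ring]

theorem statement10 (τ : ℝ) (hτ : 0 < τ) (ξ x y : ℝ → ℝ)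
    (hξ : ContinuousOn ξ (Set.Icc 0 τ))
    (hb : x 0 < ξ 0 ∧ ξ 0 < y 0)
    (hodex : ∀ t ∈ Set.Ico (0:ℝ) τ, HasDerivWithinAt x (-2 / (x t - ξ t)) (Set.Ici 0) t)
    (hodey : ∀ t ∈ Set.Ico (0:ℝ) τ, HasDerivWithinAt y (-2 / (y t - ξ t)) (Set.Ici 0) t)
    (horder : ∀ t ∈ Set.Ico (0:ℝ) τ, x t < ξ t ∧ ξ t < y t)
    (hcx : ContinuousOn x (Set.Icc 0 τ)) (hcy : ContinuousOn y (Set.Icc 0 τ))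
    (hweldx : x τ = ξ τ) (hweldy : y τ = ξ τ) :
    τ ≤ (y 0 - x 0) ^ 2 / 16 ∧
      ((∀ t ∈ Set.Icc (0:ℝ) τ, ξ t = (x 0 + y 0) / 2) →
        τ = (y 0 - x 0) ^ 2 / 16) :=
  statement10_general τ hτ ξ x y hodex hodey horder hcx hcy hweldx hweldy
end

section
/- (Lipschitz continuity of inverse hitting times, Lipschitz constant 1.) Let $\xi, \tilde{\xi} : [0,T] \to \mathbb{R}$ be drivers generating simple curves, and let $\tau_+^{-1}(\cdot;\xi)$ and $\tau_+^{-1}(\cdot;\tilde{\xi})$ denote the inverses of the right hitting-time functions (which are continuous and strictly increasing for points to the right of $\xi(0)$, resp. $\tilde{\xi}(0)$). Then for all $t_0 \in [0,T]$, $|\tau_+^{-1}(t_0;\xi) - \tau_+^{-1}(t_0;\tilde{\xi})| \leq \sup_{t \in [0,T]} |\xi(t) - \tilde{\xi}(t)|$. -/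
lemma aux11 (T t₀ δ : ℝ) (ht₀ : t₀ ∈ Set.Icc (0:ℝ) T)
    (ξ ξt : ℝ → ℝ)
    (hclose : ∀ t ∈ Set.Icc (0:ℝ) T, |ξ t - ξt t| ≤ δ)
    (y yt : ℝ)
    (h ht : ℝ → ℝ) (hh0 : h 0 = y) (hht0 : ht 0 = yt)
    (hode : ∀ t ∈ Set.Ico (0:ℝ) t₀, HasDerivWithinAt h (-2 / (h t - ξ t)) (Set.Ici 0) t)
    (hodet : ∀ t ∈ Set.Ico (0:ℝ) t₀, HasDerivWithinAt ht (-2 / (ht t - ξt t)) (Set.Ici 0) t)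
    (hgapt : ∀ t ∈ Set.Ico (0:ℝ) t₀, ξt t < ht t)
    (hch : ContinuousOn h (Set.Icc 0 t₀)) (hcht : ContinuousOn ht (Set.Icc 0 t₀))
    (hhit : h t₀ = ξ t₀) (hhitt : ht t₀ = ξt t₀) :
    y - yt ≤ δ := by
  by_contra hlt
  push_neg at hlt
  obtain ⟨ht₀0, ht₀T⟩ := ht₀
  set g : ℝ → ℝ := fun t => h t - ht t with hg
  set S : Set ℝ := Set.Icc 0 t₀ ∩ g ⁻¹' Set.Iic δ with hS
  have hcg : ContinuousOn g (Set.Icc 0 t₀) := hch.sub hcht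
  have ht₀S : t₀ ∈ S := by
    refine ⟨⟨ht₀0, le_refl _⟩, ?_⟩
    have := hclose t₀ ⟨ht₀0, ht₀T⟩
    have : ξ t₀ - ξt t₀ ≤ δ := le_trans (le_abs_self _) this
    simp only [Set.mem_preimage, Set.mem_Iic, hg]
    rw [hhit, hhitt]
    exact this
  have hSclosed : IsClosed S :=
    hcg.preimage_isClosed_of_isClosed isClosed_Icc isClosed_Iic
  have hSbdd : BddBelow S := ⟨0, fun x hx => hx.1.1⟩
  set s := sInf S with hs
  have hsS : s ∈ S := hSclosed.csInf_mem ⟨t₀, ht₀S⟩ hSbdd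
  have hg0 : δ < g 0 := by simp [hg, hh0, hht0]; linarith
  have hgs : g s ≤ δ := hsS.2
  have hs0 : 0 < s := by
    rcases lt_or_eq_of_le hsS.1.1 with h' | h'
    · exact h'
    · exfalso; rw [← h'] at hgs; linarith
  have hst₀ : s ≤ t₀ := hsS.1.2
  have hmono : StrictMonoOn g (Set.Icc 0 s) := by
    apply strictMonoOn_of_deriv_pos (convex_Icc 0 s)
      (hcg.mono (Set.Icc_subset_Icc_right hst₀))
    intro t htmem
    rw [interior_Icc] at htmem
    obtain ⟨ht1, ht2⟩ := htmem
    have htIco : t ∈ Set.Ico (0:ℝ) t₀ := ⟨le_of_lt ht1, lt_of_lt_of_le ht2 hst₀⟩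
    have hnhds : Set.Ici (0:ℝ) ∈ nhds t := Ici_mem_nhds ht1
    have hdh : HasDerivAt h (-2 / (h t - ξ t)) t :=
      (hode t htIco).hasDerivAt hnhds
    have hdht : HasDerivAt ht (-2 / (ht t - ξt t)) t :=
      (hodet t htIco).hasDerivAt hnhds
    have hdg : HasDerivAt g (-2 / (h t - ξ t) - -2 / (ht t - ξt t)) t := hdh.sub hdht
    rw [hdg.deriv]
    have htnS : t ∉ S := fun hmem => absurd (csInf_le hSbdd hmem) (not_le.mpr ht2)
    have hgt : δ < g t := by
      by_contra hle
      push_neg at hle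
      exact htnS ⟨⟨le_of_lt ht1, le_of_lt (lt_of_lt_of_le ht2 hst₀)⟩, hle⟩
    have hxi : ξ t - ξt t ≤ δ :=
      le_trans (le_abs_self _) (hclose t ⟨le_of_lt ht1, le_trans (le_of_lt htIco.2) ht₀T⟩)
    have hb : 0 < ht t - ξt t := sub_pos.mpr (hgapt t htIco)
    have hab : ht t - ξt t < h t - ξ t := by
      have : h t - ht t > δ := hgt
      linarith
    have h2 : 2 / (h t - ξ t) < 2 / (ht t - ξt t) :=
      div_lt_div_of_pos_left (by norm_num) hb hab
    have e1 : -2 / (h t - ξ t) = -(2 / (h t - ξ t)) := by ring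
    have e2 : -2 / (ht t - ξt t) = -(2 / (ht t - ξt t)) := by ring
    rw [e1, e2]
    linarith
  have := hmono ⟨le_refl 0, le_of_lt hs0⟩ ⟨le_of_lt hs0, le_refl s⟩ hs0
  linarith

theorem statement11 (T t₀ δ : ℝ) (hT : 0 ≤ T) (ht₀ : t₀ ∈ Set.Icc (0:ℝ) T)
    (ξ ξt : ℝ → ℝ)
    (hξ : ContinuousOn ξ (Set.Icc 0 T)) (hξt : ContinuousOn ξt (Set.Icc 0 T))
    (hclose : ∀ t ∈ Set.Icc (0:ℝ) T, |ξ t - ξt t| ≤ δ)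
    (y yt : ℝ) (hy : ξ 0 ≤ y) (hyt : ξt 0 ≤ yt)
    (h ht : ℝ → ℝ) (hh0 : h 0 = y) (hht0 : ht 0 = yt)
    (hode : ∀ t ∈ Set.Ico (0:ℝ) t₀, HasDerivWithinAt h (-2 / (h t - ξ t)) (Set.Ici 0) t)
    (hodet : ∀ t ∈ Set.Ico (0:ℝ) t₀, HasDerivWithinAt ht (-2 / (ht t - ξt t)) (Set.Ici 0) t)
    (hgap : ∀ t ∈ Set.Ico (0:ℝ) t₀, ξ t < h t)
    (hgapt : ∀ t ∈ Set.Ico (0:ℝ) t₀, ξt t < ht t)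
    (hch : ContinuousOn h (Set.Icc 0 t₀)) (hcht : ContinuousOn ht (Set.Icc 0 t₀))
    (hhit : h t₀ = ξ t₀) (hhitt : ht t₀ = ξt t₀) :
    |y - yt| ≤ δ := by
  have hclose' : ∀ t ∈ Set.Icc (0:ℝ) T, |ξt t - ξ t| ≤ δ := by
    intro t htm; rw [abs_sub_comm]; exact hclose t htm
  rw [abs_sub_le_iff]
  exact ⟨aux11 T t₀ δ ht₀ ξ ξt hclose y yt h ht hh0 hht0 hode hodet hgapt hch hcht hhit hhitt,
    aux11 T t₀ δ ht₀ ξt ξ hclose' yt y ht h hht0 hh0 hodet hode hgap hcht hch hhitt hhit⟩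
end

section
/- (Welding integral identity.) Let $\xi : [0,T] \to \mathbb{R}$ be a continuous driver that welds points $x_0 < \xi(0) < y_0$ at common finite hitting time $\tau$. Then $y_0^2 - x_0^2 = 4 \int_0^{\tau} \frac{\xi(t)\,\big(y(t) - x(t)\big)}{\big(\xi(t) - x(t)\big)\big(y(t) - \xi(t)\big)}\, dt$, where $x(t), y(t)$ are the flows of $x_0, y_0$ under the upward Loewner equation driven by $\xi$. -/
/-!
Under the Loewner equation `u' = -2 / (u - ξ)` one has `(u²/4)' = -1 - ξ / (u - ξ)`. Subtracting
this for `x` and `y`, the constants cancel: `(x² - y²)/4` has derivative `ξ w`, where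
`w = (y - x) / ((ξ - x)(y - ξ))` is the derivative of `(x - y)/2`. Before welding `w ≥ 0`,
so `w` is integrable as a nonnegative derivative, hence so is `ξ w`, and the fundamental theorem of
calculus gives the identity because `x τ = y τ`.
-/

open MeasureTheory Set intervalIntegral

theorem integrableOn_continuousOn_mul_deriv_of_nonneg {f w c : ℝ → ℝ} {a b : ℝ}
    (hf : ContinuousOn f (Icc a b)) (hderiv : ∀ t ∈ Ioo a b, HasDerivAt f (w t) t)
    (hw : ∀ t ∈ Ioo a b, 0 ≤ w t) (hc : ContinuousOn c (Icc a b)) :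
    IntegrableOn (fun t => c t * w t) (Icc a b) :=
  have hwi : IntegrableOn w (Icc a b) :=
    (integrableOn_Icc_iff_integrableOn_Ioc).mpr (integrableOn_deriv_of_nonneg hf hderiv hw)
  hwi.continuousOn_mul hc isCompact_Icc

section LoewnerPair

variable {ξ x y : ℝ → ℝ} {t : ℝ}

theorem hasDerivAt_loewner_sub (hx : HasDerivAt x (-2 / (x t - ξ t)) t)
    (hy : HasDerivAt y (-2 / (y t - ξ t)) t) (hxξ : x t ≠ ξ t) (hyξ : y t ≠ ξ t) :
    HasDerivAt (fun s => (x s - y s) / 2) ((y t - x t) / ((ξ t - x t) * (y t - ξ t))) t := by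
  refine ((hx.sub hy).div_const 2).congr_deriv ?_
  field_simp [sub_ne_zero.mpr hxξ, sub_ne_zero.mpr hyξ]
  ring

theorem hasDerivAt_loewner_sq_sub (hx : HasDerivAt x (-2 / (x t - ξ t)) t)
    (hy : HasDerivAt y (-2 / (y t - ξ t)) t) (hxξ : x t ≠ ξ t) (hyξ : y t ≠ ξ t) :
    HasDerivAt (fun s => (x s ^ 2 - y s ^ 2) / 4)
      (ξ t * (y t - x t) / ((ξ t - x t) * (y t - ξ t))) t := by
  refine (((hx.pow 2).sub (hy.pow 2)).div_const 4).congr_deriv ?_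
  field_simp [sub_ne_zero.mpr hxξ, sub_ne_zero.mpr hyξ]
  ring

theorem loewner_welding_rate_nonneg (hxξ : x t < ξ t) (hξy : ξ t < y t) :
    0 ≤ (y t - x t) / ((ξ t - x t) * (y t - ξ t)) :=
  div_nonneg (by linarith) (mul_pos (sub_pos.mpr hxξ) (sub_pos.mpr hξy)).le

end LoewnerPair

theorem statement14_general (τ : ℝ) (hτ : 0 < τ) (ξ x y : ℝ → ℝ)
    (hξ : ContinuousOn ξ (Set.Icc 0 τ))
    (hodex : ∀ t ∈ Set.Ico (0:ℝ) τ, HasDerivWithinAt x (-2 / (x t - ξ t)) (Set.Ici 0) t)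
    (hodey : ∀ t ∈ Set.Ico (0:ℝ) τ, HasDerivWithinAt y (-2 / (y t - ξ t)) (Set.Ici 0) t)
    (horder : ∀ t ∈ Set.Ico (0:ℝ) τ, x t < ξ t ∧ ξ t < y t)
    (hcx : ContinuousOn x (Set.Icc 0 τ)) (hcy : ContinuousOn y (Set.Icc 0 τ))
    (hweldx : x τ = ξ τ) (hweldy : y τ = ξ τ) :
    MeasureTheory.IntegrableOn
        (fun t => ξ t * (y t - x t) / ((ξ t - x t) * (y t - ξ t))) (Set.Ioo 0 τ) ∧
      (y 0) ^ 2 - (x 0) ^ 2 =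
        4 * ∫ t in (0:ℝ)..τ, ξ t * (y t - x t) / ((ξ t - x t) * (y t - ξ t)) := by
  have hdx : ∀ t ∈ Ioo (0:ℝ) τ, HasDerivAt x (-2 / (x t - ξ t)) t := fun t ht =>
    (hodex t (Ioo_subset_Ico_self ht)).hasDerivAt (Ici_mem_nhds ht.1)
  have hdy : ∀ t ∈ Ioo (0:ℝ) τ, HasDerivAt y (-2 / (y t - ξ t)) t := fun t ht =>
    (hodey t (Ioo_subset_Ico_self ht)).hasDerivAt (Ici_mem_nhds ht.1)
  have hxξ t (ht : t ∈ Ioo (0:ℝ) τ) := (horder t (Ioo_subset_Ico_self ht)).1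
  have hξy t (ht : t ∈ Ioo (0:ℝ) τ) := (horder t (Ioo_subset_Ico_self ht)).2
  have hint : IntegrableOn
      (fun t => ξ t * (y t - x t) / ((ξ t - x t) * (y t - ξ t))) (Icc 0 τ) := by
    simp only [mul_div_assoc]
    exact integrableOn_continuousOn_mul_deriv_of_nonneg ((hcx.sub hcy).div_const 2)
      (fun t ht => hasDerivAt_loewner_sub (hdx t ht) (hdy t ht) (hxξ t ht).ne (hξy t ht).ne')
      (fun t ht => loewner_welding_rate_nonneg (hxξ t ht) (hξy t ht)) hξ
  have hftc := integral_eq_sub_of_hasDerivAt_of_le (f := fun s => (x s ^ 2 - y s ^ 2) / 4) hτ.le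
    (((hcx.pow 2).sub (hcy.pow 2)).div_const 4)
    (fun t ht => hasDerivAt_loewner_sq_sub (hdx t ht) (hdy t ht) (hxξ t ht).ne (hξy t ht).ne')
    (by rwa [intervalIntegrable_iff_integrableOn_Icc_of_le hτ.le])
  refine ⟨hint.mono_set Ioo_subset_Icc_self, ?_⟩
  rw [hftc, hweldx, hweldy]
  ring

theorem statement14 (τ : ℝ) (hτ : 0 < τ) (ξ x y : ℝ → ℝ)
    (hξ : ContinuousOn ξ (Set.Icc 0 τ))
    (hb : x 0 < ξ 0 ∧ ξ 0 < y 0)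
    (hodex : ∀ t ∈ Set.Ico (0:ℝ) τ, HasDerivWithinAt x (-2 / (x t - ξ t)) (Set.Ici 0) t)
    (hodey : ∀ t ∈ Set.Ico (0:ℝ) τ, HasDerivWithinAt y (-2 / (y t - ξ t)) (Set.Ici 0) t)
    (horder : ∀ t ∈ Set.Ico (0:ℝ) τ, x t < ξ t ∧ ξ t < y t)
    (hcx : ContinuousOn x (Set.Icc 0 τ)) (hcy : ContinuousOn y (Set.Icc 0 τ))
    (hweldx : x τ = ξ τ) (hweldy : y τ = ξ τ) :
    MeasureTheory.IntegrableOn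
        (fun t => ξ t * (y t - x t) / ((ξ t - x t) * (y t - ξ t))) (Set.Ioo 0 τ) ∧
      (y 0) ^ 2 - (x 0) ^ 2 =
        4 * ∫ t in (0:ℝ)..τ, ξ t * (y t - x t) / ((ξ t - x t) * (y t - ξ t)) :=
  statement14_general τ hτ ξ x y hξ hodex hodey horder hcx hcy hweldx hweldy
end

section
/- (Far-from-center welding is fast, special case.) Suppose a continuous driver $\xi : [0,\tau] \to \mathbb{R}$ welds points $x_0 < \xi(0) < y_0$ with $x_0 + y_0 = 0$ at time $\tau$, and $|\xi(\tau)| = \delta > 0$. Then $\tau < (y_0 - x_0)^2/16$; more precisely, there exists a function $f(\delta)$, strictly decreasing in $\delta$ with $f(0) = (y_0-x_0)^2/16$, depending only on $\delta$ and $y_0$, such that $\tau \leq f(\delta)$. -/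
/-!
Write `A = y - ξ`, `B = ξ - x` for the distances of the two flows to the driver. Then
`d/dt (y - x)² = -4 (A + B)² / (A B) ≤ -16`, so `(y - x)² + 16 t` is nonincreasing; between time
`0` and the welding time this already gives `16 τ ≤ (2 y₀)²`.

If the welding happens at `e = ξ τ ≠ 0`, the midpoint `(x + y) / 2` must drift towards `e`, and
`(x + y)' = 2 (A - B) / (A B)`. As long as `y - x ≥ |e|`, one may add the drift term
`2 l e (x + y)` to the energy at the cost of lowering the rate `16` to `16 - 8 l²`. Running this
refined energy until the time `t₁` at which `y - x = |e|`, and the plain one from `t₁` to `τ`,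
and optimising at `l = e² / (2 y₀²)`, gives `τ ≤ y₀² / 4 - e⁴ / (32 y₀²)`.
-/

open Set

structure LoewnerFlowPair (ξ x y : ℝ → ℝ) (τ : ℝ) : Prop where
  continuousOn_lower : ContinuousOn x (Icc 0 τ)
  continuousOn_upper : ContinuousOn y (Icc 0 τ)
  hasDerivAt_lower : ∀ t ∈ Ioo 0 τ, HasDerivAt x (-2 / (x t - ξ t)) t
  hasDerivAt_upper : ∀ t ∈ Ioo 0 τ, HasDerivAt y (-2 / (y t - ξ t)) t
  lower_lt : ∀ t ∈ Ioo 0 τ, x t < ξ t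
  lt_upper : ∀ t ∈ Ioo 0 τ, ξ t < y t

/-- `(a + b)² - LHS = ((l (a + b) - |a - b|)² + (1 - l²) |a - b|²) / 2`. -/
theorem refined_four_mul_le_sq_add {l : ℝ} (hl : l ^ 2 ≤ 1) (a b : ℝ) :
    (4 - 2 * l ^ 2) * (a * b) + l * (a + b) * |a - b| ≤ (a + b) ^ 2 := by
  nlinarith [sq_nonneg (l * (a + b) - |a - b|), sq_abs (a - b),
    mul_nonneg (sub_nonneg.2 hl) (sq_nonneg |a - b|)]

/-- An interval of length `|e|` containing `e` lies on the same side of `0` as `e`. -/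
theorem sq_le_mul_add_of_mem_Icc_of_sub_eq_abs {a b e : ℝ} (ha : a ≤ e) (hb : e ≤ b)
    (hab : b - a = |e|) : e ^ 2 ≤ e * (a + b) := by
  rcases abs_cases e with ⟨habs, _⟩ | ⟨habs, _⟩ <;> nlinarith

namespace LoewnerFlowPair

variable {ξ x y : ℝ → ℝ} {τ : ℝ}

theorem mono (h : LoewnerFlowPair ξ x y τ) {s : ℝ} (hs : s ≤ τ) : LoewnerFlowPair ξ x y s where
  continuousOn_lower := h.continuousOn_lower.mono (Icc_subset_Icc_right hs)
  continuousOn_upper := h.continuousOn_upper.mono (Icc_subset_Icc_right hs)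
  hasDerivAt_lower t ht := h.hasDerivAt_lower t ⟨ht.1, ht.2.trans_le hs⟩
  hasDerivAt_upper t ht := h.hasDerivAt_upper t ⟨ht.1, ht.2.trans_le hs⟩
  lower_lt t ht := h.lower_lt t ⟨ht.1, ht.2.trans_le hs⟩
  lt_upper t ht := h.lt_upper t ⟨ht.1, ht.2.trans_le hs⟩

theorem monotoneOn_lower (h : LoewnerFlowPair ξ x y τ) : MonotoneOn x (Icc 0 τ) := by
  refine monotoneOn_of_hasDerivWithinAt_nonneg (convex_Icc 0 τ)
    (f' := fun t => -2 / (x t - ξ t)) h.continuousOn_lower ?_ ?_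
  all_goals rw [interior_Icc]; intro t ht
  · exact (h.hasDerivAt_lower t ht).hasDerivWithinAt
  · exact div_nonneg_of_nonpos (by norm_num) (by linarith [h.lower_lt t ht])

theorem antitoneOn_upper (h : LoewnerFlowPair ξ x y τ) : AntitoneOn y (Icc 0 τ) := by
  refine antitoneOn_of_hasDerivWithinAt_nonpos (convex_Icc 0 τ)
    (f' := fun t => -2 / (y t - ξ t)) h.continuousOn_upper ?_ ?_
  all_goals rw [interior_Icc]; intro t ht
  · exact (h.hasDerivAt_upper t ht).hasDerivWithinAt
  · exact div_nonpos_of_nonpos_of_nonneg (by norm_num) (by linarith [h.lt_upper t ht])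

theorem antitoneOn_energy (h : LoewnerFlowPair ξ x y τ) (c k : ℝ)
    (hineq : ∀ t ∈ Ioo 0 τ, c * ((y t - ξ t) * (ξ t - x t))
      + 2 * k * ((y t - ξ t) - (ξ t - x t)) ≤ 4 * (y t - x t) ^ 2) :
    AntitoneOn (fun t => (y t - x t) ^ 2 + c * t + k * (x t + y t)) (Icc 0 τ) := by
  refine antitoneOn_of_hasDerivWithinAt_nonpos (convex_Icc 0 τ)
    (f' := fun t => 2 * (y t - x t) * (-2 / (y t - ξ t) - -2 / (x t - ξ t)) + c
      + k * (-2 / (x t - ξ t) + -2 / (y t - ξ t))) ?_ ?_ ?_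
  · exact ((h.continuousOn_upper.sub h.continuousOn_lower).pow 2).add
      (continuousOn_const.mul continuousOn_id) |>.add
      (continuousOn_const.mul (h.continuousOn_lower.add h.continuousOn_upper))
  all_goals rw [interior_Icc]; intro t ht
  · have hx := h.hasDerivAt_lower t ht
    have hy := h.hasDerivAt_upper t ht
    exact ((((hy.sub hx).pow 2).add ((hasDerivAt_id t).const_mul c)).add
      ((hx.add hy).const_mul k)).hasDerivWithinAt.congr_deriv (by simp only [Pi.sub_apply]; ring)
  · have hA : 0 < y t - ξ t := by linarith [h.lt_upper t ht]
    have hB : 0 < ξ t - x t := by linarith [h.lower_lt t ht]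
    have hx : x t - ξ t ≠ 0 := by linarith
    have hform : 2 * (y t - x t) * (-2 / (y t - ξ t) - -2 / (x t - ξ t)) + c
        + k * (-2 / (x t - ξ t) + -2 / (y t - ξ t))
        = (c * ((y t - ξ t) * (ξ t - x t)) + 2 * k * ((y t - ξ t) - (ξ t - x t))
          - 4 * (y t - x t) ^ 2) / ((y t - ξ t) * (ξ t - x t)) := by
      field_simp
      ring
    rw [hform]
    exact div_nonpos_of_nonpos_of_nonneg (by linarith [hineq t ht]) (by positivity)

theorem antitoneOn_gap (h : LoewnerFlowPair ξ x y τ) :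
    AntitoneOn (fun t => y t - x t) (Icc 0 τ) := fun s hs t ht hst => by
  linarith [h.monotoneOn_lower hs ht hst, h.antitoneOn_upper hs ht hst]

theorem antitoneOn_sq_gap_add (h : LoewnerFlowPair ξ x y τ) :
    AntitoneOn (fun t => (y t - x t) ^ 2 + 16 * t) (Icc 0 τ) := by
  simpa using h.antitoneOn_energy 16 0 fun t _ => by
    nlinarith [four_mul_le_sq_add (y t - ξ t) (ξ t - x t)]

theorem antitoneOn_refined_energy (h : LoewnerFlowPair ξ x y τ) {l e : ℝ} (hl0 : 0 ≤ l)
    (hl1 : l ≤ 1) (hgap : ∀ t ∈ Ioo 0 τ, |e| ≤ y t - x t) :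
    AntitoneOn (fun t => (y t - x t) ^ 2 + (16 - 8 * l ^ 2) * t + 2 * l * e * (x t + y t))
      (Icc 0 τ) := by
  refine h.antitoneOn_energy _ _ fun t ht => ?_
  set A := y t - ξ t
  set B := ξ t - x t
  have hAB : y t - x t = A + B := by ring
  have hkey := refined_four_mul_le_sq_add (by nlinarith : l ^ 2 ≤ 1) A B
  have hdrift : l * e * (A - B) ≤ l * (A + B) * |A - B| :=
    calc l * e * (A - B) ≤ l * (|e| * |A - B|) := by
          rw [mul_assoc, ← abs_mul]; exact mul_le_mul_of_nonneg_left (le_abs_self _) hl0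
      _ ≤ l * ((A + B) * |A - B|) := by gcongr; exact hAB ▸ hgap t ht
      _ = l * (A + B) * |A - B| := by ring
  rw [hAB]
  nlinarith

theorem welding_time_le (h : LoewnerFlowPair ξ x y τ) (hτ : 0 ≤ τ) {y₀ : ℝ} (hy₀ : 0 < y₀)
    (hx0 : x 0 = -y₀) (hy0 : y 0 = y₀) (hxτ : x τ = ξ τ) (hyτ : y τ = ξ τ) :
    τ ≤ y₀ ^ 2 / 4 - ξ τ ^ 4 / (32 * y₀ ^ 2) := by
  set e := ξ τ
  have h0 : (0 : ℝ) ∈ Icc 0 τ := left_mem_Icc.2 hτ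
  have hττ : τ ∈ Icc 0 τ := right_mem_Icc.2 hτ
  have he : |e| ≤ y₀ := abs_le.2
    ⟨by linarith [h.monotoneOn_lower h0 hττ hτ], by linarith [h.antitoneOn_upper h0 hττ hτ]⟩
  obtain ⟨t₁, ht₁, hd₁⟩ : ∃ t₁ ∈ Icc 0 τ, y t₁ - x t₁ = |e| :=
    intermediate_value_Icc' hτ (h.continuousOn_upper.sub h.continuousOn_lower)
      ⟨by simp [hxτ, hyτ], by simp only [Pi.sub_apply, hx0, hy0]; linarith⟩
  set l := e ^ 2 / (2 * y₀ ^ 2)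
  have hl0 : 0 ≤ l := by positivity
  have hl1 : l ≤ 1 := by
    rw [div_le_one (by positivity)]
    nlinarith [sq_abs e, abs_nonneg e]
  have hR := (h.mono ht₁.2).antitoneOn_refined_energy hl0 hl1 fun t ht => by
    have := h.antitoneOn_gap ⟨ht.1.le, ht.2.le.trans ht₁.2⟩ ht₁ ht.2.le
    simp only at this
    linarith
  have hcross : e ^ 2 ≤ e * (x t₁ + y t₁) :=
    sq_le_mul_add_of_mem_Icc_of_sub_eq_abs (hxτ ▸ h.monotoneOn_lower ht₁ hττ ht₁.2)
      (hyτ ▸ h.antitoneOn_upper ht₁ hττ ht₁.2) hd₁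
  have h0₁ := hR (left_mem_Icc.2 ht₁.1) (right_mem_Icc.2 ht₁.1) ht₁.1
  have h₁τ := h.antitoneOn_sq_gap_add ht₁ hττ ht₁.2
  have h0τ := h.antitoneOn_sq_gap_add h0 hττ hτ
  simp only [hx0, hy0, hxτ, hyτ, hd₁] at h0₁ h₁τ h0τ
  have hbound : 16 * τ ≤ 4 * y₀ ^ 2 - 2 * l * e ^ 2 + 2 * l ^ 2 * y₀ ^ 2 := by
    nlinarith [sq_abs e, mul_le_mul_of_nonneg_left hcross (by positivity : 0 ≤ 2 * l),
      mul_le_mul_of_nonneg_left (ht₁.2.trans (by linarith : τ ≤ y₀ ^ 2 / 4)) (sq_nonneg l)]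
  have hl : 2 * l * e ^ 2 - 2 * l ^ 2 * y₀ ^ 2 = e ^ 4 / (2 * y₀ ^ 2) := by
    simp only [l]; field_simp; ring
  have hquot : e ^ 4 / (32 * y₀ ^ 2) = e ^ 4 / (2 * y₀ ^ 2) / 16 := by field_simp; ring
  linarith

end LoewnerFlowPair

theorem statement15 (y₀ : ℝ) (hy₀ : 0 < y₀) :
    ∃ f : ℝ → ℝ, StrictAntiOn f (Set.Ici 0) ∧ f 0 = y₀ ^ 2 / 4 ∧
      ∀ (δ τ : ℝ) (ξ x y : ℝ → ℝ), 0 < δ → 0 < τ →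
        ContinuousOn ξ (Set.Icc 0 τ) →
        x 0 = -y₀ → y 0 = y₀ →
        (∀ t ∈ Set.Ico (0:ℝ) τ, HasDerivWithinAt x (-2 / (x t - ξ t)) (Set.Ici 0) t) →
        (∀ t ∈ Set.Ico (0:ℝ) τ, HasDerivWithinAt y (-2 / (y t - ξ t)) (Set.Ici 0) t) →
        (∀ t ∈ Set.Ico (0:ℝ) τ, x t < ξ t ∧ ξ t < y t) →
        ContinuousOn x (Set.Icc 0 τ) → ContinuousOn y (Set.Icc 0 τ) →
        x τ = ξ τ → y τ = ξ τ → |ξ τ| = δ →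
        τ ≤ f δ ∧ τ < y₀ ^ 2 / 4 := by
  refine ⟨fun δ => y₀ ^ 2 / 4 - δ ^ 4 / (32 * y₀ ^ 2), ?_, by simp, ?_⟩
  · intro p hp q _ hpq
    have := pow_lt_pow_left₀ hpq hp four_ne_zero
    dsimp only
    gcongr
  intro δ τ ξ x y _ hτ _ hx0 hy0 hdx hdy hbetween hxc hyc hxτ hyτ hξτ
  have hIoo : Ioo 0 τ ⊆ Ico 0 τ := Ioo_subset_Ico_self
  have h : LoewnerFlowPair ξ x y τ :=
    { continuousOn_lower := hxc
      continuousOn_upper := hyc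
      hasDerivAt_lower := fun t ht => (hdx t (hIoo ht)).hasDerivAt (Ici_mem_nhds ht.1)
      hasDerivAt_upper := fun t ht => (hdy t (hIoo ht)).hasDerivAt (Ici_mem_nhds ht.1)
      lower_lt := fun t ht => (hbetween t (hIoo ht)).1
      lt_upper := fun t ht => (hbetween t (hIoo ht)).2 }
  have hτf := h.welding_time_le hτ.le hy₀ hx0 hy0 hxτ hyτ
  rw [← Even.pow_abs (by decide : Even 4), hξτ] at hτf
  exact ⟨hτf, hτf.trans_lt (sub_lt_self _ (by positivity))⟩
end

section
/- (Rigidity of the zero driver from hitting times.) Let $\xi : [0,T] \to \mathbb{R}$ be a continuous driver whose hitting-time function satisfies $\tau(x; \xi) = x^2/4$ for all $x$ in an interval $[-y_0, y_0]$ (with $y_0^2/4 \leq T$). Then $\xi(t) = 0$ for all $0 \leq t \leq y_0^2/4$. -/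
/-!
For the zero driver the points `±y` travel along `±√(y² - 4t)`, so `(a - b)² + 16 t` is constant.
For an arbitrary driver `ξ`, with `P = a - ξ` and `Q = b - ξ`, the Loewner equation gives
`d/dt ((a - b)² + 16 t) = 4 (P + Q)² / (P Q)`, whose sign is that of `P Q` and hence constant.
If `±y` weld exactly at time `y²/4`, this quantity takes the same value `4 y²` at both ends, so its
derivative vanishes: `ξ = (a + b) / 2`. Then `a + b` has zero derivative, so it stays `0`, and so
does `ξ`.
-/

open Set Filter Topology

section Calculus

variable {f f' : ℝ → ℝ} {a b : ℝ}

lemma eqOn_of_hasDerivAt_zero (hf : ContinuousOn f (Icc a b))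
    (hf' : ∀ t ∈ Ioo a b, HasDerivAt f 0 t) : ∀ t ∈ Icc a b, f t = f a := by
  have hderiv : ∀ t ∈ interior (Icc a b), HasDerivWithinAt f 0 (interior (Icc a b)) t := by
    rw [interior_Icc]
    exact fun t ht => (hf' t ht).hasDerivWithinAt
  have hmono := monotoneOn_of_hasDerivWithinAt_nonneg (convex_Icc a b) hf hderiv fun _ _ => le_rfl
  have hanti := antitoneOn_of_hasDerivWithinAt_nonpos (convex_Icc a b) hf hderiv fun _ _ => le_rfl
  intro t ht
  have ha : a ∈ Icc a b := ⟨le_rfl, ht.1.trans ht.2⟩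
  exact le_antisymm (hanti ha ht ht.1) (hmono ha ht ht.1)

lemma eq_zero_of_hasDerivAt_of_nonneg_or_nonpos (hf : ContinuousOn f (Icc a b))
    (hf' : ∀ t ∈ Ioo a b, HasDerivAt f (f' t) t)
    (hsign : (∀ t ∈ Ioo a b, 0 ≤ f' t) ∨ (∀ t ∈ Ioo a b, f' t ≤ 0)) (hfab : f a = f b) :
    ∀ t ∈ Ioo a b, f' t = 0 := by
  have hderiv : ∀ t ∈ interior (Icc a b), HasDerivWithinAt f (f' t) (interior (Icc a b)) t := by
    rw [interior_Icc]
    exact fun t ht => (hf' t ht).hasDerivWithinAt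
  have hconst : ∀ t ∈ Icc a b, f t = f a := by
    intro t ht
    have ha : a ∈ Icc a b := ⟨le_rfl, ht.1.trans ht.2⟩
    have hb : b ∈ Icc a b := ⟨ht.1.trans ht.2, le_rfl⟩
    rcases hsign with hpos | hneg
    · have hmono := monotoneOn_of_hasDerivWithinAt_nonneg (convex_Icc a b) hf hderiv
        (by rwa [interior_Icc])
      exact le_antisymm (hfab ▸ hmono ht hb ht.2) (hmono ha ht ht.1)
    · have hanti := antitoneOn_of_hasDerivWithinAt_nonpos (convex_Icc a b) hf hderiv
        (by rwa [interior_Icc])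
      exact le_antisymm (hanti ha ht ht.1) (hfab ▸ hanti ht hb ht.2)
  intro t ht
  have hlocal : f =ᶠ[𝓝 t] fun _ => f a :=
    eventuallyEq_of_mem (Ioo_mem_nhds ht.1 ht.2) fun s hs => hconst s (Ioo_subset_Icc_self hs)
  exact (hf' t ht).unique ((hasDerivAt_const t (f a)).congr_of_eventuallyEq hlocal)

end Calculus

section Loewner

variable {ξ a b : ℝ → ℝ} {τ t : ℝ}

/-- The trajectory `t ↦ x(t)` of a point whose hitting time is at least `τ`. -/
structure LoewnerTrajectory (ξ : ℝ → ℝ) (τ : ℝ) (f : ℝ → ℝ) : Prop where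
  continuousOn : ContinuousOn f (Icc 0 τ)
  hasDerivAt : ∀ t ∈ Ioo 0 τ, HasDerivAt f (-2 / (f t - ξ t)) t
  ne : ∀ t ∈ Ioo 0 τ, f t ≠ ξ t

lemma hasDerivAt_sub_sq_add_sixteen_mul (ha : HasDerivAt a (-2 / (a t - ξ t)) t)
    (hb : HasDerivAt b (-2 / (b t - ξ t)) t) (hat : a t ≠ ξ t) (hbt : b t ≠ ξ t) :
    HasDerivAt (fun s => (a s - b s) ^ 2 + 16 * s)
      (4 * (a t + b t - 2 * ξ t) ^ 2 / ((a t - ξ t) * (b t - ξ t))) t := by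
  have h := ((ha.sub hb).pow 2).add ((hasDerivAt_id t).const_mul 16)
  refine h.congr_deriv ?_
  have hP : a t - ξ t ≠ 0 := sub_ne_zero.2 hat
  have hQ : b t - ξ t ≠ 0 := sub_ne_zero.2 hbt
  simp only [Pi.sub_apply]
  field_simp
  ring

lemma hasDerivAt_add_eq_zero (ha : HasDerivAt a (-2 / (a t - ξ t)) t)
    (hb : HasDerivAt b (-2 / (b t - ξ t)) t) (hmid : a t + b t = 2 * ξ t) :
    HasDerivAt (fun s => a s + b s) 0 t := by
  have hQ : b t - ξ t = -(a t - ξ t) := by linarith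
  refine (ha.add hb).congr_deriv ?_
  rw [hQ, div_neg, add_neg_cancel]

namespace LoewnerTrajectory

/-- The equality case of the welding-time bound `16 τ ≤ (a 0 - b 0) ^ 2`. -/
theorem add_eq_two_mul_of_weld (ha : LoewnerTrajectory ξ τ a) (hb : LoewnerTrajectory ξ τ b)
    (hξ : ContinuousOn ξ (Ioo 0 τ)) (hinit : (a 0 - b 0) ^ 2 = 16 * τ) (hweld : a τ = b τ) :
    ∀ t ∈ Ioo 0 τ, a t + b t = 2 * ξ t := by
  have hprod_ne : ∀ t ∈ Ioo 0 τ, (a t - ξ t) * (b t - ξ t) ≠ 0 := fun t ht =>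
    mul_ne_zero (sub_ne_zero.2 (ha.ne t ht)) (sub_ne_zero.2 (hb.ne t ht))
  have hprod_cont : ContinuousOn (fun t => (a t - ξ t) * (b t - ξ t)) (Ioo 0 τ) :=
    ((ha.continuousOn.mono Ioo_subset_Icc_self).sub hξ).mul
      ((hb.continuousOn.mono Ioo_subset_Icc_self).sub hξ)
  have hsign : (∀ t ∈ Ioo 0 τ, 0 ≤ 4 * (a t + b t - 2 * ξ t) ^ 2 / ((a t - ξ t) * (b t - ξ t))) ∨
      (∀ t ∈ Ioo 0 τ, 4 * (a t + b t - 2 * ξ t) ^ 2 / ((a t - ξ t) * (b t - ξ t)) ≤ 0) := by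
    rcases isPreconnected_Ioo.mapsTo_Ioi_or_Iio hprod_cont hprod_ne with hpos | hneg
    · exact Or.inl fun t ht => div_nonneg (by positivity) (hpos ht).le
    · exact Or.inr fun t ht => div_nonpos_of_nonneg_of_nonpos (by positivity) (hneg ht).le
  have hφ_cont : ContinuousOn (fun s => (a s - b s) ^ 2 + 16 * s) (Icc 0 τ) := by
    have := ha.continuousOn
    have := hb.continuousOn
    fun_prop
  have hderiv_zero := eq_zero_of_hasDerivAt_of_nonneg_or_nonpos hφ_cont
    (fun t ht => hasDerivAt_sub_sq_add_sixteen_mul (ha.hasDerivAt t ht) (hb.hasDerivAt t ht)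
      (ha.ne t ht) (hb.ne t ht))
    hsign (by simp only [hinit, hweld]; ring)
  intro t ht
  have hsq := (div_eq_zero_iff.1 (hderiv_zero t ht)).resolve_right (hprod_ne t ht)
  have : a t + b t - 2 * ξ t = 0 := by simpa using hsq
  linarith

theorem driver_eq_zero (ha : LoewnerTrajectory ξ τ a) (hb : LoewnerTrajectory ξ τ b)
    (hτ : 0 < τ) (hξ : ContinuousOn ξ (Icc 0 τ)) (hinit : (a 0 - b 0) ^ 2 = 16 * τ)
    (hsym : a 0 + b 0 = 0) (hweld : a τ = b τ) : ∀ t ∈ Icc 0 τ, ξ t = 0 := by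
  have hmid := ha.add_eq_two_mul_of_weld hb (hξ.mono Ioo_subset_Icc_self) hinit hweld
  have hsum : ∀ t ∈ Icc 0 τ, a t + b t = a 0 + b 0 :=
    eqOn_of_hasDerivAt_zero (ha.continuousOn.add hb.continuousOn) fun t ht =>
      hasDerivAt_add_eq_zero (ha.hasDerivAt t ht) (hb.hasDerivAt t ht) (hmid t ht)
  have hξ_Ioo : EqOn ξ 0 (Ioo 0 τ) := fun t ht => by
    have := hsum t (Ioo_subset_Icc_self ht)
    simp only [Pi.zero_apply]
    linarith [hmid t ht]
  exact hξ_Ioo.of_subset_closure hξ continuousOn_const Ioo_subset_Icc_self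
    (closure_Ioo hτ.ne).superset

end LoewnerTrajectory

end Loewner

theorem statement16 (T y₀ : ℝ) (hy₀ : 0 < y₀) (hT : y₀ ^ 2 / 4 ≤ T)
    (ξ : ℝ → ℝ) (hξ : ContinuousOn ξ (Set.Icc 0 T))
    (u : ℝ → ℝ → ℝ)
    (hu0 : ∀ x ∈ Set.Icc (-y₀) y₀, x ≠ 0 → u x 0 = x)
    (hode : ∀ x ∈ Set.Icc (-y₀) y₀, x ≠ 0 → ∀ t ∈ Set.Ico (0:ℝ) (x ^ 2 / 4),
        HasDerivWithinAt (u x) (-2 / (u x t - ξ t)) (Set.Ici 0) t)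
    (hgap : ∀ x ∈ Set.Icc (-y₀) y₀, x ≠ 0 → ∀ t ∈ Set.Ico (0:ℝ) (x ^ 2 / 4),
        u x t ≠ ξ t)
    (hcont : ∀ x ∈ Set.Icc (-y₀) y₀, x ≠ 0 → ContinuousOn (u x) (Set.Icc 0 (x ^ 2 / 4)))
    (hhit : ∀ x ∈ Set.Icc (-y₀) y₀, x ≠ 0 → u x (x ^ 2 / 4) = ξ (x ^ 2 / 4)) :
    ∀ t ∈ Set.Icc (0:ℝ) (y₀ ^ 2 / 4), ξ t = 0 := by
  have traj : ∀ x ∈ Icc (-y₀) y₀, x ≠ 0 → LoewnerTrajectory ξ (x ^ 2 / 4) (u x) :=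
    fun x hx hx0 =>
      { continuousOn := hcont x hx hx0
        hasDerivAt := fun t ht =>
          (hode x hx hx0 t (Ioo_subset_Ico_self ht)).hasDerivAt (Ici_mem_nhds ht.1)
        ne := fun t ht => hgap x hx hx0 t (Ioo_subset_Ico_self ht) }
  have hpos : y₀ ∈ Icc (-y₀) y₀ := ⟨by linarith, le_rfl⟩
  have hneg : -y₀ ∈ Icc (-y₀) y₀ := ⟨le_rfl, by linarith⟩
  have hy₀' : -y₀ ≠ 0 := neg_ne_zero.2 hy₀.ne'
  have hb := traj (-y₀) hneg hy₀'
  have hb_hit := hhit (-y₀) hneg hy₀'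
  rw [neg_sq] at hb hb_hit
  refine (traj y₀ hpos hy₀.ne').driver_eq_zero hb (by positivity)
    (hξ.mono (Icc_subset_Icc_right hT)) ?_ ?_ ?_
  · rw [hu0 y₀ hpos hy₀.ne', hu0 (-y₀) hneg hy₀']
    ring
  · rw [hu0 y₀ hpos hy₀.ne', hu0 (-y₀) hneg hy₀']
    ring
  · rw [hhit y₀ hpos hy₀.ne', hb_hit]
end
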